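/- Let p > 3 be prime. If C is a finite set of nonzero Markoff triples mod p closed under all three Vieta involutions, then in F_p one has |C| = (3/2)*|C|, where |C| is reduced mod p, by summing the Penner-type coordinates y1 + y2 + y3 = 1 over C and exchanging the order of summation. -/

import Mathlib

def Markoff (p : ℕ) (x : ZMod p × ZMod p × ZMod p) : Prop :=
  x.1^2 + x.2.1^2 + x.2.2^2 = 3 * x.1 * x.2.1 * x.2.2

def vieta1 (p : ℕ) (x : ZMod p × ZMod p × ZMod p) : ZMod p × ZMod p × ZMod p :=
  (3 * x.2.1 * x.2.2 - x.1, x.2.1, x.2.2)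

def vieta2 (p : ℕ) (x : ZMod p × ZMod p × ZMod p) : ZMod p × ZMod p × ZMod p :=
  (x.1, 3 * x.1 * x.2.2 - x.2.1, x.2.2)

def vieta3 (p : ℕ) (x : ZMod p × ZMod p × ZMod p) : ZMod p × ZMod p × ZMod p :=
  (x.1, x.2.1, 3 * x.1 * x.2.1 - x.2.2)

def y1 (p : ℕ) [Fact p.Prime] (x : ZMod p × ZMod p × ZMod p) : ZMod p :=
  if x.1 * x.2.1 * x.2.2 ≠ 0 then x.1 / (3 * x.2.1 * x.2.2)
  else if x.1 = 0 then 0 else 1/2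

def y2 (p : ℕ) [Fact p.Prime] (x : ZMod p × ZMod p × ZMod p) : ZMod p :=
  if x.1 * x.2.1 * x.2.2 ≠ 0 then x.2.1 / (3 * x.1 * x.2.2)
  else if x.2.1 = 0 then 0 else 1/2

def y3 (p : ℕ) [Fact p.Prime] (x : ZMod p × ZMod p × ZMod p) : ZMod p :=
  if x.1 * x.2.1 * x.2.2 ≠ 0 then x.2.2 / (3 * x.1 * x.2.1)
  else if x.2.2 = 0 then 0 else 1/2


/-!
Each Penner-type coordinate `yᵢ` is exchanged with `1 - yᵢ` by the `i`-th Vieta involution, so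
pairing `x` with its image shows `2 ∑_{x ∈ C} yᵢ(x) = |C|` for each `i`. On the other hand
`y₁ + y₂ + y₃ = 1` on every nonzero Markoff triple (for nonzero coordinates this is the Markoff
equation divided by `3 x₁ x₂ x₃`). Summing over `C` gives `|C| = 3/2 · |C|` in `𝔽_p`.
-/

open Finset

lemma ZMod.natCast_ne_zero_of_pos_of_lt {n p : ℕ} (h0 : 0 < n) (h : n < p) :
    (n : ZMod p) ≠ 0 := by
  rw [Ne, ZMod.natCast_eq_zero_iff]
  exact Nat.not_dvd_of_pos_of_lt h0 h

lemma Finset.two_mul_sum_eq_card_of_add_comp_eq_one {α K : Type*} [Semiring K]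
    {s : Finset α} {σ : α → α} (hσ : Function.Involutive σ) (hs : ∀ x ∈ s, σ x ∈ s)
    {f : α → K} (hf : ∀ x ∈ s, f x + f (σ x) = 1) :
    2 * ∑ x ∈ s, f x = s.card := by
  have hcomp : ∑ x ∈ s, f (σ x) = ∑ x ∈ s, f x :=
    sum_nbij' σ σ hs hs (fun x _ => hσ x) (fun x _ => hσ x) fun _ _ => rfl
  calc 2 * ∑ x ∈ s, f x = ∑ x ∈ s, f x + ∑ x ∈ s, f (σ x) := by rw [hcomp, two_mul]
    _ = ∑ _x ∈ s, (1 : K) := by rw [← sum_add_distrib]; exact sum_congr rfl hf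
    _ = s.card := by simp

section PennerCoord

variable {K : Type*} [Field K] {a b c : K}

lemma one_half_add_one_half (h2 : (2 : K) ≠ 0) : (1 / 2 + 1 / 2 : K) = 1 := by
  rw [← add_div, one_add_one_eq_two, div_self h2]

lemma ne_zero_and_ne_zero_of_markoff (hM : a ^ 2 + b ^ 2 + c ^ 2 = 3 * a * b * c)
    (hnz : ¬(a = 0 ∧ b = 0 ∧ c = 0)) (ha : a = 0) : b ≠ 0 ∧ c ≠ 0 := by
  subst ha
  constructor
  · rintro rfl
    exact hnz ⟨rfl, rfl, pow_eq_zero_iff two_ne_zero |>.mp (by linear_combination hM)⟩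
  · rintro rfl
    exact hnz ⟨rfl, pow_eq_zero_iff two_ne_zero |>.mp (by linear_combination hM), rfl⟩

variable [DecidableEq K]

/-- `yᵢ(x) = pennerCoord xᵢ xⱼ xₖ`. -/
def pennerCoord (a b c : K) : K :=
  if a * b * c ≠ 0 then a / (3 * b * c) else if a = 0 then 0 else 1 / 2

lemma pennerCoord_zero_left (b c : K) : pennerCoord 0 b c = 0 := by
  simp [pennerCoord]

lemma pennerCoord_of_ne_zero (hb : b ≠ 0) (hc : c ≠ 0) (a : K) :
    pennerCoord a b c = a / (3 * b * c) := by
  by_cases ha : a = 0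
  · simp [pennerCoord, ha]
  · simp [pennerCoord, ha, hb, hc]

lemma pennerCoord_of_eq_zero_or (ha : a ≠ 0) (h : b = 0 ∨ c = 0) : pennerCoord a b c = 1 / 2 := by
  rcases h with rfl | rfl <;> simp [pennerCoord, ha]

lemma pennerCoord_add_pennerCoord_vieta (h2 : (2 : K) ≠ 0) (h3 : (3 : K) ≠ 0)
    (hM : a ^ 2 + b ^ 2 + c ^ 2 = 3 * a * b * c) (hnz : ¬(a = 0 ∧ b = 0 ∧ c = 0)) :
    pennerCoord a b c + pennerCoord (3 * b * c - a) b c = 1 := by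
  by_cases hbc : b ≠ 0 ∧ c ≠ 0
  · rw [pennerCoord_of_ne_zero hbc.1 hbc.2, pennerCoord_of_ne_zero hbc.1 hbc.2, ← add_div,
      add_sub_cancel, div_self (by simp [h3, hbc.1, hbc.2])]
  · have hbc : b = 0 ∨ c = 0 := by tauto
    have ha : a ≠ 0 := by
      rintro rfl
      have := ne_zero_and_ne_zero_of_markoff hM hnz rfl
      tauto
    have hva : 3 * b * c - a ≠ 0 := by rcases hbc with rfl | rfl <;> simpa using ha
    rw [pennerCoord_of_eq_zero_or ha hbc, pennerCoord_of_eq_zero_or hva hbc,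
      one_half_add_one_half h2]

lemma pennerCoord_add_pennerCoord_add_pennerCoord (h2 : (2 : K) ≠ 0) (h3 : (3 : K) ≠ 0)
    (hM : a ^ 2 + b ^ 2 + c ^ 2 = 3 * a * b * c) (hnz : ¬(a = 0 ∧ b = 0 ∧ c = 0)) :
    pennerCoord a b c + pennerCoord b a c + pennerCoord c a b = 1 := by
  obtain rfl | ha := eq_or_ne a 0
  · obtain ⟨hb, hc⟩ := ne_zero_and_ne_zero_of_markoff hM hnz rfl
    rw [pennerCoord_zero_left, pennerCoord_of_eq_zero_or hb (.inl rfl),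
      pennerCoord_of_eq_zero_or hc (.inl rfl), zero_add, one_half_add_one_half h2]
  obtain rfl | hb := eq_or_ne b 0
  · obtain ⟨ha, hc⟩ := ne_zero_and_ne_zero_of_markoff (a := 0) (b := a) (c := c)
      (by linear_combination hM) (by tauto) rfl
    rw [pennerCoord_of_eq_zero_or ha (.inl rfl), pennerCoord_zero_left,
      pennerCoord_of_eq_zero_or hc (.inr rfl), add_zero, one_half_add_one_half h2]
  obtain rfl | hc := eq_or_ne c 0
  · obtain ⟨ha, hb⟩ := ne_zero_and_ne_zero_of_markoff (a := 0) (b := a) (c := b)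
      (by linear_combination hM) (by tauto) rfl
    rw [pennerCoord_of_eq_zero_or ha (.inr rfl), pennerCoord_of_eq_zero_or hb (.inr rfl),
      pennerCoord_zero_left, add_zero, one_half_add_one_half h2]
  rw [pennerCoord_of_ne_zero hb hc, pennerCoord_of_ne_zero ha hc, pennerCoord_of_ne_zero ha hb]
  field_simp
  linear_combination hM

end PennerCoord

lemma vieta1_involutive (p : ℕ) : Function.Involutive (vieta1 p) := fun x => by simp [vieta1]

lemma vieta2_involutive (p : ℕ) : Function.Involutive (vieta2 p) := fun x => by simp [vieta2]

lemma vieta3_involutive (p : ℕ) : Function.Involutive (vieta3 p) := fun x => by simp [vieta3]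

section Markoff

variable {p : ℕ} [Fact p.Prime]

lemma y1_eq_pennerCoord (x : ZMod p × ZMod p × ZMod p) :
    y1 p x = pennerCoord x.1 x.2.1 x.2.2 := rfl

lemma y2_eq_pennerCoord (x : ZMod p × ZMod p × ZMod p) :
    y2 p x = pennerCoord x.2.1 x.1 x.2.2 := by
  rw [y2, pennerCoord, mul_comm x.2.1 x.1]

lemma y3_eq_pennerCoord (x : ZMod p × ZMod p × ZMod p) :
    y3 p x = pennerCoord x.2.2 x.1 x.2.1 := by
  rw [y3, pennerCoord, mul_rotate x.2.2 x.1 x.2.1]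

variable {x : ZMod p × ZMod p × ZMod p}

lemma not_all_eq_zero_of_ne (hnz : x ≠ (0, 0, 0)) : ¬(x.1 = 0 ∧ x.2.1 = 0 ∧ x.2.2 = 0) := by
  simpa [Prod.ext_iff] using hnz

lemma y1_add_y1_vieta1 (h2 : (2 : ZMod p) ≠ 0) (h3 : (3 : ZMod p) ≠ 0) (hM : Markoff p x)
    (hnz : x ≠ (0, 0, 0)) : y1 p x + y1 p (vieta1 p x) = 1 :=
  pennerCoord_add_pennerCoord_vieta h2 h3 hM (not_all_eq_zero_of_ne hnz)

lemma y2_add_y2_vieta2 (h2 : (2 : ZMod p) ≠ 0) (h3 : (3 : ZMod p) ≠ 0) (hM : Markoff p x)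
    (hnz : x ≠ (0, 0, 0)) : y2 p x + y2 p (vieta2 p x) = 1 := by
  rw [y2_eq_pennerCoord, y2_eq_pennerCoord]
  exact pennerCoord_add_pennerCoord_vieta h2 h3 (by unfold Markoff at hM; linear_combination hM)
    (by have := not_all_eq_zero_of_ne hnz; tauto)

lemma y3_add_y3_vieta3 (h2 : (2 : ZMod p) ≠ 0) (h3 : (3 : ZMod p) ≠ 0) (hM : Markoff p x)
    (hnz : x ≠ (0, 0, 0)) : y3 p x + y3 p (vieta3 p x) = 1 := by
  rw [y3_eq_pennerCoord, y3_eq_pennerCoord]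
  exact pennerCoord_add_pennerCoord_vieta h2 h3 (by unfold Markoff at hM; linear_combination hM)
    (by have := not_all_eq_zero_of_ne hnz; tauto)

lemma y1_add_y2_add_y3 (h2 : (2 : ZMod p) ≠ 0) (h3 : (3 : ZMod p) ≠ 0) (hM : Markoff p x)
    (hnz : x ≠ (0, 0, 0)) : y1 p x + y2 p x + y3 p x = 1 := by
  rw [y1_eq_pennerCoord, y2_eq_pennerCoord, y3_eq_pennerCoord]
  exact pennerCoord_add_pennerCoord_add_pennerCoord h2 h3 hM (not_all_eq_zero_of_ne hnz)

end Markoff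

theorem stmt14 (p : ℕ) [Fact p.Prime] (hp : 3 < p)
    (C : Finset (ZMod p × ZMod p × ZMod p))
    (hM : ∀ x ∈ C, Markoff p x) (hnz : ∀ x ∈ C, x ≠ (0, 0, 0))
    (h1 : ∀ x ∈ C, vieta1 p x ∈ C) (h2 : ∀ x ∈ C, vieta2 p x ∈ C)
    (h3 : ∀ x ∈ C, vieta3 p x ∈ C) :
    (C.card : ZMod p) = (3 / 2 : ZMod p) * (C.card : ZMod p) := by
  have htwo : (2 : ZMod p) ≠ 0 := by
    exact_mod_cast ZMod.natCast_ne_zero_of_pos_of_lt two_pos (by omega : 2 < p)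
  have hthree : (3 : ZMod p) ≠ 0 := by
    exact_mod_cast ZMod.natCast_ne_zero_of_pos_of_lt three_pos hp
  have hS1 := two_mul_sum_eq_card_of_add_comp_eq_one (f := y1 p) (vieta1_involutive p) h1
    fun x hx => y1_add_y1_vieta1 htwo hthree (hM x hx) (hnz x hx)
  have hS2 := two_mul_sum_eq_card_of_add_comp_eq_one (f := y2 p) (vieta2_involutive p) h2
    fun x hx => y2_add_y2_vieta2 htwo hthree (hM x hx) (hnz x hx)
  have hS3 := two_mul_sum_eq_card_of_add_comp_eq_one (f := y3 p) (vieta3_involutive p) h3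
    fun x hx => y3_add_y3_vieta3 htwo hthree (hM x hx) (hnz x hx)
  have hS : ∑ x ∈ C, y1 p x + ∑ x ∈ C, y2 p x + ∑ x ∈ C, y3 p x = C.card := by
    rw [← sum_add_distrib, ← sum_add_distrib,
      sum_congr rfl fun x hx => y1_add_y2_add_y3 htwo hthree (hM x hx) (hnz x hx)]
    simp
  calc (C.card : ZMod p)
      = 2⁻¹ * (2 * ∑ x ∈ C, y1 p x + 2 * ∑ x ∈ C, y2 p x + 2 * ∑ x ∈ C, y3 p x) := by
        rw [← mul_add, ← mul_add, hS, inv_mul_cancel_left₀ htwo]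
    _ = (3 / 2 : ZMod p) * (C.card : ZMod p) := by
        rw [hS1, hS2, hS3]
        ring
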